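/- (Lemma 4, abstract form: Lipschitz gradient of the Gaussian smoothing.) Let l be a positive integer, σ > 0, C > 0, and let F: ℝ^l → ℝ satisfy |F(x) − F(y)| ≤ C‖x − y‖₂ for all x, y. Let γ_l be the standard Gaussian measure on ℝ^l. Define G: ℝ^l → ℝ^l by G(θ) = (1/σ) ∫ F(θ + σε) ε dγ_l(ε). Then for all θ′, θ″ ∈ ℝ^l: ‖G(θ′) − G(θ″)‖₂ ≤ (C√l/σ) ‖θ′ − θ″‖₂. -/

import Mathlib

/-! Pointwise, `|F (θ' + σ ε) - F (θ'' + σ ε)| ≤ C ‖θ' - θ''‖`, so the two Gaussian integrals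
differ by at most `C ‖θ' - θ''‖ 𝔼‖ε‖`; and `𝔼‖ε‖ ≤ √(𝔼‖ε‖²) = √l` because the variance of `‖ε‖`
is nonnegative. -/

open MeasureTheory ProbabilityTheory

/-- The standard Gaussian measure on `ℝ^l` (product of `l` standard one-dimensional
Gaussians, transported to `EuclideanSpace`). -/
noncomputable def stdGaussian (l : ℕ) : Measure (EuclideanSpace ℝ (Fin l)) :=
  (Measure.pi fun _ : Fin l => gaussianReal 0 1).map
    (MeasurableEquiv.toLp 2 (Fin l → ℝ))

section LipschitzSmoothing

variable {E : Type*} [NormedAddCommGroup E] [NormedSpace ℝ E] [MeasurableSpace E]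
  [BorelSpace E] [SecondCountableTopology E] {μ : Measure E} {F : E → ℝ} {C : ℝ}

lemma integrable_smul_of_abs_sub_le (hF : ∀ x y, |F x - F y| ≤ C * ‖x - y‖)
    (h₁ : Integrable (fun ε => ‖ε‖) μ) (h₂ : Integrable (fun ε => ‖ε‖ ^ 2) μ)
    (θ : E) (σ : ℝ) : Integrable (fun ε => F (θ + σ • ε) • ε) μ := by
  have hFc : Continuous F :=
    (LipschitzWith.of_dist_le' (K := C) fun x y => by
      simpa [Real.dist_eq, dist_eq_norm] using hF x y).continuous
  refine Integrable.mono' ((h₁.const_mul |F θ|).add (h₂.const_mul (C * |σ|)))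
    (by fun_prop : Continuous fun ε => F (θ + σ • ε) • ε).aestronglyMeasurable
    (ae_of_all _ fun ε => ?_)
  have hgrowth : |F (θ + σ • ε)| ≤ |F θ| + C * |σ| * ‖ε‖ := by
    have h := hF (θ + σ • ε) θ
    rw [add_sub_cancel_left, norm_smul, Real.norm_eq_abs, ← mul_assoc] at h
    linarith [abs_sub_abs_le_abs_sub (F (θ + σ • ε)) (F θ)]
  calc ‖F (θ + σ • ε) • ε‖ = |F (θ + σ • ε)| * ‖ε‖ := by rw [norm_smul, Real.norm_eq_abs]
    _ ≤ (|F θ| + C * |σ| * ‖ε‖) * ‖ε‖ := by gcongr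
    _ = |F θ| * ‖ε‖ + C * |σ| * ‖ε‖ ^ 2 := by ring

lemma norm_integral_smul_sub_le (hF : ∀ x y, |F x - F y| ≤ C * ‖x - y‖)
    (h₁ : Integrable (fun ε => ‖ε‖) μ) (h₂ : Integrable (fun ε => ‖ε‖ ^ 2) μ)
    (θ' θ'' : E) (σ : ℝ) :
    ‖∫ ε, F (θ' + σ • ε) • ε ∂μ - ∫ ε, F (θ'' + σ • ε) • ε ∂μ‖
      ≤ C * ‖θ' - θ''‖ * ∫ ε, ‖ε‖ ∂μ := by
  rw [← integral_sub (integrable_smul_of_abs_sub_le hF h₁ h₂ θ' σ)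
    (integrable_smul_of_abs_sub_le hF h₁ h₂ θ'' σ), ← integral_const_mul]
  refine norm_integral_le_of_norm_le (h₁.const_mul _) (ae_of_all _ fun ε => ?_)
  rw [← sub_smul, norm_smul, Real.norm_eq_abs]
  gcongr
  simpa using hF (θ' + σ • ε) (θ'' + σ • ε)

end LipschitzSmoothing

lemma sq_integral_le_integral_sq {Ω : Type*} [MeasurableSpace Ω] {μ : Measure Ω}
    [IsProbabilityMeasure μ] {X : Ω → ℝ} (hX : MemLp X 2 μ) :
    (∫ ω, X ω ∂μ) ^ 2 ≤ ∫ ω, X ω ^ 2 ∂μ := by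
  have := variance_nonneg X μ
  rw [variance_eq_sub hX] at this
  simpa using this

lemma integral_sq_gaussianReal (m : ℝ) (v : NNReal) :
    ∫ x, x ^ 2 ∂gaussianReal m v = m ^ 2 + v := by
  have h := variance_eq_sub (memLp_id_gaussianReal (μ := m) (v := v) 2)
  simp only [Pi.pow_apply, id_eq, variance_id_gaussianReal, integral_id_gaussianReal] at h
  linarith

lemma stdGaussian_eq_stdGaussian_euclideanSpace (l : ℕ) :
    stdGaussian l = ProbabilityTheory.stdGaussian (EuclideanSpace ℝ (Fin l)) :=
  map_pi_eq_stdGaussian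

instance (l : ℕ) : IsGaussian (stdGaussian l) := by
  rw [stdGaussian_eq_stdGaussian_euclideanSpace]
  infer_instance

lemma memLp_norm_stdGaussian (l : ℕ) :
    MemLp (fun ε => ‖ε‖) 2 (stdGaussian l) :=
  IsGaussian.memLp_two_id.norm

lemma integral_norm_sq_stdGaussian (l : ℕ) :
    ∫ ε, ‖ε‖ ^ 2 ∂(stdGaussian l) = l := by
  have hint (i : Fin l) :
      Integrable (fun x : Fin l → ℝ => x i ^ 2) (Measure.pi fun _ => gaussianReal 0 1) :=
    integrable_comp_eval (μ := fun _ => gaussianReal 0 1) (f := fun x => x ^ 2)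
      (memLp_id_gaussianReal 2).integrable_sq
  have hcoord (i : Fin l) :
      ∫ x : Fin l → ℝ, x i ^ 2 ∂(Measure.pi fun _ => gaussianReal 0 1) = 1 := by
    rw [integral_comp_eval (μ := fun _ => gaussianReal 0 1) (f := fun x => x ^ 2) (by fun_prop),
      integral_sq_gaussianReal]
    simp
  simp_rw [_root_.stdGaussian, integral_map_equiv, EuclideanSpace.real_norm_sq_eq,
    MeasurableEquiv.coe_toLp]
  rw [integral_finsetSum _ fun i _ => hint i]
  simp [hcoord]

lemma integral_norm_stdGaussian_le (l : ℕ) :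
    ∫ ε, ‖ε‖ ∂(stdGaussian l) ≤ Real.sqrt l := by
  refine le_trans (le_abs_self _) (Real.abs_le_sqrt ?_)
  rw [← integral_norm_sq_stdGaussian]
  exact sq_integral_le_integral_sq (memLp_norm_stdGaussian l)

theorem stmt15_general (l : ℕ) (σ C : ℝ) (hσ : 0 < σ)
    (F : EuclideanSpace ℝ (Fin l) → ℝ)
    (hF : ∀ x y, |F x - F y| ≤ C * ‖x - y‖) :
    ∀ θ' θ'' : EuclideanSpace ℝ (Fin l),
      ‖(σ⁻¹ • ∫ ε, F (θ' + σ • ε) • ε ∂(stdGaussian l))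
          - σ⁻¹ • ∫ ε, F (θ'' + σ • ε) • ε ∂(stdGaussian l)‖
        ≤ C * Real.sqrt l / σ * ‖θ' - θ''‖ := by
  intro θ' θ''
  have hL : 0 ≤ C * ‖θ' - θ''‖ := (abs_nonneg _).trans (hF θ' θ'')
  have hnorm := memLp_norm_stdGaussian l
  have hdiff := norm_integral_smul_sub_le hF (hnorm.integrable one_le_two) hnorm.integrable_sq
    θ' θ'' σ
  rw [← smul_sub, norm_smul, Real.norm_of_nonneg (inv_nonneg.mpr hσ.le)]
  calc σ⁻¹ * ‖_‖ ≤ σ⁻¹ * (C * ‖θ' - θ''‖ * Real.sqrt l) := by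
        gcongr
        exact hdiff.trans (mul_le_mul_of_nonneg_left (integral_norm_stdGaussian_le l) hL)
    _ = C * Real.sqrt l / σ * ‖θ' - θ''‖ := by field_simp

/-- Lemma 4 (abstract form): if `F` is `C`-Lipschitz, then the ES-gradient
`G(θ) = (1/σ) ∫ F(θ + σε) ε dγ_l(ε)` is `(C√l/σ)`-Lipschitz. -/
theorem stmt15 (l : ℕ) (hl : 0 < l) (σ C : ℝ) (hσ : 0 < σ) (hC : 0 < C)
    (F : EuclideanSpace ℝ (Fin l) → ℝ)
    (hF : ∀ x y, |F x - F y| ≤ C * ‖x - y‖) :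
    ∀ θ' θ'' : EuclideanSpace ℝ (Fin l),
      ‖(σ⁻¹ • ∫ ε, F (θ' + σ • ε) • ε ∂(stdGaussian l))
          - σ⁻¹ • ∫ ε, F (θ'' + σ • ε) • ε ∂(stdGaussian l)‖
        ≤ C * Real.sqrt l / σ * ‖θ' - θ''‖ :=
  stmt15_general l σ C hσ F hF
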